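/- Let Ω ⊆ ℝ^n be a nonempty bounded open set, and for p > 1 define λ_{1,p}(Ω) as the infimum of ∫_Ω ‖∇u‖^p dx / ∫_Ω |u|^p dx over all smooth functions u : ℝ^n → ℝ, not identically zero, with compact support contained in Ω. Then the function p ↦ p · (λ_{1,p}(Ω))^{1/p} is monotone increasing in p: for all 1 < q < p one has q · (λ_{1,q}(Ω))^{1/q} ≤ p · (λ_{1,p}(Ω))^{1/p}. -/

import Mathlib

open MeasureTheory Real

/-- The variational characterization of the first Dirichlet eigenvalue of the
`p`-Laplacian on `Ω ⊆ ℝ^n`: the infimum of Rayleigh quotients over nonzero smooth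
functions with compact support contained in `Ω`. -/
noncomputable def lambdaOneP {n : ℕ} (Ω : Set (EuclideanSpace ℝ (Fin n))) (p : ℝ) : ℝ :=
  sInf { R : ℝ | ∃ u : EuclideanSpace ℝ (Fin n) → ℝ, ContDiff ℝ (⊤ : ℕ∞) u ∧
    HasCompactSupport u ∧ tsupport u ⊆ Ω ∧ u ≠ 0 ∧
    R = (∫ x in Ω, ‖gradient u x‖ ^ p) / (∫ x in Ω, |u x| ^ p) }

/-! For a test function `u`, the functions `vε = (u² + ε²) ^ (p / 2q) - |ε| ^ (p / q)` are smooth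
test functions approximating `|u| ^ (p / q)`. By the chain rule
`‖∇vε‖ ≤ (p / q) (u² + ε²) ^ ((p - q) / 2q) ‖∇u‖`, and Hölder's inequality with exponents
`p / (p - q)` and `p / q` gives
`∫ ‖∇vε‖ ^ q ≤ (p / q) ^ q (∫ (u² + ε²) ^ (p / 2)) ^ (1 - q / p) (∫ ‖∇u‖ ^ p) ^ (q / p)`,
while `∫ |vε| ^ q → ∫ |u| ^ p`. Letting `ε → 0` yields
`λ_{1,q} ≤ (p / q) ^ q R_p(u) ^ (q / p)`, and the infimum over `u` gives the claim. -/

lemma rpow_one_sub_mul_rpow_div_self {a b θ : ℝ} (ha : 0 < a) (hb : 0 ≤ b) :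
    a ^ (1 - θ) * b ^ θ / a = (b / a) ^ θ := by
  rw [div_rpow hb ha.le, rpow_sub ha, rpow_one]
  field_simp

lemma mul_rpow_one_div_le_of_le {a b p q : ℝ} (ha : 0 ≤ a) (hb : 0 ≤ b) (hp : 0 < p)
    (hq : 0 < q) (h : a ≤ (p / q) ^ q * b ^ (q / p)) : q * a ^ (1 / q) ≤ p * b ^ (1 / p) := by
  have h' := rpow_le_rpow ha h (one_div_nonneg.2 hq.le)
  rw [mul_rpow (by positivity) (by positivity), ← rpow_mul (by positivity), ← rpow_mul hb,
    mul_one_div_cancel hq.ne', rpow_one, div_mul_div_comm, mul_one, mul_comm p q,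
    ← div_div, div_self hq.ne'] at h'
  calc q * a ^ (1 / q) ≤ q * (p / q * b ^ (1 / p)) := by gcongr
    _ = p * b ^ (1 / p) := by field_simp

lemma le_mul_sInf_rpow {S : Set ℝ} {c p : ℝ} (hp : 0 < p) (hc : 0 ≤ c) (hS : S.Nonempty)
    (hS₀ : ∀ R ∈ S, 0 ≤ R) (h : ∀ R ∈ S, c ≤ p * R ^ (1 / p)) : c ≤ p * sInf S ^ (1 / p) := by
  have hpow : ∀ {x : ℝ}, 0 ≤ x → (x ^ p) ^ (1 / p) = x := fun hx => by
    rw [← rpow_mul hx, mul_one_div_cancel hp.ne', rpow_one]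
  have hlow : ∀ R ∈ S, (c / p) ^ p ≤ R := fun R hR => by
    have := rpow_le_rpow (by positivity) ((div_le_iff₀' hp).2 (h R hR)) hp.le
    rwa [← rpow_mul (hS₀ R hR), one_div_mul_cancel hp.ne', rpow_one] at this
  have := rpow_le_rpow (by positivity) (le_csInf hS hlow) (one_div_nonneg.2 hp.le)
  rw [hpow (by positivity)] at this
  exact (div_le_iff₀' hp).1 this

section SmoothAbs

variable {ε s t : ℝ}

noncomputable def smoothAbs (ε t : ℝ) : ℝ := √(t ^ 2 + ε ^ 2)

lemma abs_le_smoothAbs : |t| ≤ smoothAbs ε t :=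
  abs_le_sqrt (le_add_of_nonneg_right (sq_nonneg ε))

lemma abs_le_smoothAbs_left : |ε| ≤ smoothAbs ε t :=
  abs_le_sqrt (le_add_of_nonneg_left (sq_nonneg t))

lemma smoothAbs_nonneg : 0 ≤ smoothAbs ε t := Real.sqrt_nonneg _

lemma sq_smoothAbs : smoothAbs ε t ^ 2 = t ^ 2 + ε ^ 2 :=
  sq_sqrt (by positivity)

lemma smoothAbs_pos (hε : ε ≠ 0) : 0 < smoothAbs ε t :=
  (abs_pos.2 hε).trans_le abs_le_smoothAbs_left

@[simp] lemma smoothAbs_zero_left : smoothAbs 0 t = |t| := by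
  simp [smoothAbs, sqrt_sq_eq_abs]

@[simp] lemma smoothAbs_zero_right : smoothAbs ε 0 = |ε| := by
  simp [smoothAbs, sqrt_sq_eq_abs]

lemma continuous_smoothAbs : Continuous fun z : ℝ × ℝ => smoothAbs z.1 z.2 := by
  unfold smoothAbs; fun_prop

lemma contDiff_smoothAbs (hε : ε ≠ 0) {n : WithTop ℕ∞} : ContDiff ℝ n (smoothAbs ε) :=
  ((contDiff_id.pow 2).add contDiff_const).sqrt fun t => by
    change t ^ 2 + ε ^ 2 ≠ 0
    positivity

lemma hasDerivAt_smoothAbs (hε : ε ≠ 0) :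
    HasDerivAt (smoothAbs ε) (t / smoothAbs ε t) t := by
  have hρ := smoothAbs_pos (t := t) hε
  have h := ((hasDerivAt_pow 2 t).add_const (ε ^ 2)).sqrt (sq_smoothAbs ▸ pow_pos hρ 2).ne'
  refine h.congr_deriv ?_
  rw [smoothAbs] at hρ ⊢
  field_simp
  norm_num

noncomputable def smoothAbsRpow (ε s t : ℝ) : ℝ := smoothAbs ε t ^ s - |ε| ^ s

lemma smoothAbsRpow_zero_right : smoothAbsRpow ε s 0 = 0 := by
  simp [smoothAbsRpow]

lemma smoothAbsRpow_zero_left (hs : s ≠ 0) : smoothAbsRpow 0 s t = |t| ^ s := by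
  simp [smoothAbsRpow, zero_rpow hs]

lemma smoothAbsRpow_pos (hs : 0 < s) (ht : t ≠ 0) : 0 < smoothAbsRpow ε s t := by
  refine sub_pos.2 (rpow_lt_rpow (abs_nonneg ε) ?_ hs)
  rw [smoothAbs, ← sqrt_sq_eq_abs]
  exact sqrt_lt_sqrt (sq_nonneg ε) (lt_add_of_pos_left _ (by positivity))

lemma continuous_smoothAbsRpow (hs : 0 ≤ s) :
    Continuous fun z : ℝ × ℝ => smoothAbsRpow z.1 s z.2 :=
  ((continuous_smoothAbs.rpow_const fun _ => Or.inr hs).sub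
    (continuous_abs.comp continuous_fst |>.rpow_const fun _ => Or.inr hs))

lemma contDiff_smoothAbsRpow (hε : ε ≠ 0) {n : WithTop ℕ∞} : ContDiff ℝ n (smoothAbsRpow ε s) :=
  ((contDiff_smoothAbs hε).rpow_const_of_ne fun _ => (smoothAbs_pos hε).ne').sub contDiff_const

lemma hasDerivAt_smoothAbsRpow (hε : ε ≠ 0) :
    HasDerivAt (smoothAbsRpow ε s) (t / smoothAbs ε t * s * smoothAbs ε t ^ (s - 1)) t :=
  ((hasDerivAt_smoothAbs hε).rpow_const (Or.inl (smoothAbs_pos hε).ne')).sub_const _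

lemma abs_deriv_smoothAbsRpow_le (hε : ε ≠ 0) (hs : 0 ≤ s) :
    |t / smoothAbs ε t * s * smoothAbs ε t ^ (s - 1)| ≤ s * smoothAbs ε t ^ (s - 1) := by
  have hρ := smoothAbs_pos (t := t) hε
  rw [abs_mul, abs_mul, abs_div, abs_of_pos hρ, abs_of_nonneg hs,
    abs_of_pos (rpow_pos_of_pos hρ _), mul_assoc]
  exact mul_le_of_le_one_left (by positivity) ((div_le_one hρ).2 abs_le_smoothAbs)

end SmoothAbs

section Holder

variable {α : Type*} [MeasurableSpace α] {μ : Measure α}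

lemma MeasureTheory.Integrable.memLp_rpow_of_nonneg {H : α → ℝ} (hH : 0 ≤ᵐ[μ] H)
    (hHi : Integrable H μ) {r : ℝ} (hr : 0 < r) :
    MemLp (fun x => H x ^ r) (ENNReal.ofReal (1 / r)) μ := by
  have h := (memLp_one_iff_integrable.2 hHi).norm_rpow_div (ENNReal.ofReal r)
  rw [ENNReal.toReal_ofReal hr.le] at h
  rw [ENNReal.ofReal_div_of_pos hr, ENNReal.ofReal_one]
  exact h.ae_eq (hH.mono fun x hx => by rw [norm_of_nonneg hx])

theorem integral_rpow_mul_rpow_le {F G : α → ℝ} (hF : 0 ≤ᵐ[μ] F) (hG : 0 ≤ᵐ[μ] G)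
    (hFi : Integrable F μ) (hGi : Integrable G μ) {θ : ℝ} (hθ₀ : 0 < θ) (hθ₁ : θ < 1) :
    ∫ x, F x ^ (1 - θ) * G x ^ θ ∂μ ≤ (∫ x, F x ∂μ) ^ (1 - θ) * (∫ x, G x ∂μ) ^ θ := by
  have hconj : (1 / (1 - θ)).HolderConjugate (1 / θ) :=
    Real.holderConjugate_iff.2 ⟨by rw [lt_one_div] <;> linarith, by simp⟩
  have hrpow : ∀ {H : α → ℝ}, 0 ≤ᵐ[μ] H → ∀ {r : ℝ}, r ≠ 0 →
      ∫ x, (H x ^ r) ^ (1 / r) ∂μ = ∫ x, H x ∂μ := fun hH r hr =>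
    integral_congr_ae (hH.mono fun x hx => by simp only [one_div, rpow_rpow_inv hx hr])
  have h := integral_mul_le_Lp_mul_Lq_of_nonneg hconj
    (hF.mono fun x hx => rpow_nonneg hx (1 - θ)) (hG.mono fun x hx => rpow_nonneg hx θ)
    (hFi.memLp_rpow_of_nonneg hF (by linarith)) (hGi.memLp_rpow_of_nonneg hG hθ₀)
  rwa [hrpow hF (by linarith), hrpow hG hθ₀.ne', one_div_one_div, one_div_one_div] at h

end Holder

lemma setIntegral_tsupport_abs_rpow_pos {X : Type*} [TopologicalSpace X] [MeasurableSpace X]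
    [OpensMeasurableSpace X] {μ : Measure X} [μ.IsOpenPosMeasure] [IsFiniteMeasureOnCompacts μ]
    {u : X → ℝ} {p : ℝ} (hu : Continuous u) (hcs : HasCompactSupport u) (hne : u ≠ 0)
    (hp : 0 < p) : 0 < ∫ x in tsupport u, |u x| ^ p ∂μ := by
  obtain ⟨x, hx⟩ := Function.ne_iff.1 hne
  rw [setIntegral_eq_integral_of_forall_compl_eq_zero fun y hy => by
    rw [image_eq_zero_of_notMem_tsupport hy, abs_zero, zero_rpow hp.ne']]
  exact (hu.abs.rpow_const fun _ => Or.inr hp.le).integral_pos_of_hasCompactSupport_nonneg_nonzero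
    (hcs.comp_left (g := fun t => |t| ^ p) (by simp [zero_rpow hp.ne'])) (fun _ => by positivity)
    (rpow_pos_of_pos (abs_pos.2 hx) p).ne'

section Gradient

variable {E : Type*} [NormedAddCommGroup E] [InnerProductSpace ℝ E] [CompleteSpace E]
  {u : E → ℝ} {x : E} {ε s : ℝ}

lemma norm_gradient_eq_norm_fderiv (f : E → ℝ) (x : E) : ‖gradient f x‖ = ‖fderiv ℝ f x‖ :=
  (InnerProductSpace.toDual ℝ E).symm.norm_map _

lemma gradient_eq_zero_of_notMem_tsupport (hx : x ∉ tsupport u) : gradient u x = 0 := by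
  rw [gradient, image_eq_zero_of_notMem_tsupport fun h => hx (tsupport_fderiv_subset ℝ h),
    map_zero]

lemma continuous_norm_gradient (hu : ContDiff ℝ 1 u) : Continuous fun x => ‖gradient u x‖ := by
  simpa only [norm_gradient_eq_norm_fderiv] using (hu.continuous_fderiv one_ne_zero).norm

lemma norm_gradient_smoothAbsRpow_comp_le (hε : ε ≠ 0) (hs : 0 ≤ s) (hu : DifferentiableAt ℝ u x) :
    ‖gradient (smoothAbsRpow ε s ∘ u) x‖ ≤ s * smoothAbs ε (u x) ^ (s - 1) * ‖gradient u x‖ := by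
  rw [norm_gradient_eq_norm_fderiv, norm_gradient_eq_norm_fderiv,
    ((hasDerivAt_smoothAbsRpow hε).comp_hasFDerivAt x hu.hasFDerivAt).fderiv, norm_smul,
    Real.norm_eq_abs]
  exact mul_le_mul_of_nonneg_right (abs_deriv_smoothAbsRpow_le hε hs) (norm_nonneg _)

variable {p q : ℝ}

lemma norm_gradient_smoothAbsRpow_comp_rpow_le (hu : DifferentiableAt ℝ u x) (hε : ε ≠ 0)
    (hq : 0 < q) (hqp : q < p) :
    ‖gradient (smoothAbsRpow ε (p / q) ∘ u) x‖ ^ q ≤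
      (p / q) ^ q * ((smoothAbs ε (u x) ^ p) ^ (1 - q / p) * (‖gradient u x‖ ^ p) ^ (q / p)) := by
  have hp : 0 < p := hq.trans hqp
  have hρ := smoothAbs_nonneg (ε := ε) (t := u x)
  calc ‖gradient (smoothAbsRpow ε (p / q) ∘ u) x‖ ^ q
      ≤ (p / q * smoothAbs ε (u x) ^ (p / q - 1) * ‖gradient u x‖) ^ q :=
        rpow_le_rpow (norm_nonneg _)
          (norm_gradient_smoothAbsRpow_comp_le hε (by positivity) hu) hq.le
    _ = (p / q) ^ q * ((smoothAbs ε (u x) ^ p) ^ (1 - q / p) * (‖gradient u x‖ ^ p) ^ (q / p)) := by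
        rw [mul_rpow (by positivity) (norm_nonneg _), mul_rpow (by positivity) (by positivity),
          ← rpow_mul hρ, ← rpow_mul hρ, ← rpow_mul (norm_nonneg _), mul_assoc,
          mul_div_cancel₀ q hp.ne', sub_one_mul, div_mul_cancel₀ p hq.ne', mul_one_sub,
          mul_div_cancel₀ q hp.ne']

variable [MeasurableSpace E] [BorelSpace E] {μ : Measure E} {K : Set E}

theorem setIntegral_norm_gradient_smoothAbsRpow_comp_le [IsFiniteMeasureOnCompacts μ]
    (hK : IsCompact K) (hu : ContDiff ℝ 1 u) (hε : ε ≠ 0) (hq : 0 < q) (hqp : q < p) :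
    ∫ x in K, ‖gradient (smoothAbsRpow ε (p / q) ∘ u) x‖ ^ q ∂μ ≤
      (p / q) ^ q * ((∫ x in K, smoothAbs ε (u x) ^ p ∂μ) ^ (1 - q / p) *
        (∫ x in K, ‖gradient u x‖ ^ p ∂μ) ^ (q / p)) := by
  have hp : 0 < p := hq.trans hqp
  have hF : Continuous fun x => smoothAbs ε (u x) ^ p :=
    ((contDiff_smoothAbs (n := 0) hε).continuous.comp hu.continuous).rpow_const
      fun _ => Or.inr hp.le
  have hG : Continuous fun x => ‖gradient u x‖ ^ p :=
    (continuous_norm_gradient hu).rpow_const fun _ => Or.inr hp.le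
  have hFG : Continuous fun x =>
      (smoothAbs ε (u x) ^ p) ^ (1 - q / p) * (‖gradient u x‖ ^ p) ^ (q / p) :=
    (hF.rpow_const fun _ => Or.inr (sub_nonneg.2 ((div_le_one hp).2 hqp.le))).mul
      (hG.rpow_const fun _ => Or.inr (by positivity))
  calc ∫ x in K, ‖gradient (smoothAbsRpow ε (p / q) ∘ u) x‖ ^ q ∂μ
      ≤ ∫ x in K, (p / q) ^ q *
          ((smoothAbs ε (u x) ^ p) ^ (1 - q / p) * (‖gradient u x‖ ^ p) ^ (q / p)) ∂μ :=
        integral_mono_of_nonneg (ae_of_all _ fun _ => by positivity)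
          ((hFG.continuousOn.integrableOn_compact hK).const_mul _)
          (ae_of_all _ fun x =>
            norm_gradient_smoothAbsRpow_comp_rpow_le (hu.differentiable one_ne_zero x) hε hq hqp)
    _ = (p / q) ^ q * ∫ x in K,
          (smoothAbs ε (u x) ^ p) ^ (1 - q / p) * (‖gradient u x‖ ^ p) ^ (q / p) ∂μ :=
        integral_const_mul _ _
    _ ≤ _ := by
        gcongr
        exact integral_rpow_mul_rpow_le (ae_of_all _ fun _ => rpow_nonneg smoothAbs_nonneg _)
          (ae_of_all _ fun _ => by positivity) (hF.continuousOn.integrableOn_compact hK)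
          (hG.continuousOn.integrableOn_compact hK) (by positivity) ((div_lt_one hp).2 hqp)

end Gradient

section Rayleigh

variable {E : Type*} [NormedAddCommGroup E] [InnerProductSpace ℝ E] [CompleteSpace E]
  [MeasurableSpace E] {μ : Measure E} {u : E → ℝ} {s : Set E} {p : ℝ}

noncomputable def rayleighQuotient (μ : Measure E) (p : ℝ) (u : E → ℝ) : ℝ :=
  (∫ x, ‖gradient u x‖ ^ p ∂μ) / ∫ x, |u x| ^ p ∂μ

lemma rayleighQuotient_nonneg : 0 ≤ rayleighQuotient μ p u :=
  div_nonneg (integral_nonneg fun _ => by positivity) (integral_nonneg fun _ => by positivity)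

lemma rayleighQuotient_restrict (hs : tsupport u ⊆ s) (hp : p ≠ 0) :
    rayleighQuotient (μ.restrict s) p u = rayleighQuotient μ p u := by
  unfold rayleighQuotient
  congr 1 <;> refine setIntegral_eq_integral_of_forall_compl_eq_zero fun x hx => ?_
  · rw [gradient_eq_zero_of_notMem_tsupport fun h => hx (hs h), norm_zero, zero_rpow hp]
  · rw [image_eq_zero_of_notMem_tsupport fun h => hx (hs h), abs_zero, zero_rpow hp]

end Rayleigh

section TestFunction

variable {E : Type*} [NormedAddCommGroup E] [NormedSpace ℝ E] {Ω : Set E} {u : E → ℝ}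
  {ε s : ℝ}

structure IsTestFunction (Ω : Set E) (u : E → ℝ) : Prop where
  contDiff : ContDiff ℝ (⊤ : ℕ∞) u
  hasCompactSupport : HasCompactSupport u
  tsupport_subset : tsupport u ⊆ Ω
  ne_zero : u ≠ 0

lemma IsTestFunction.smoothAbsRpow_comp (hu : IsTestFunction Ω u) (hε : ε ≠ 0) (hs : 0 < s) :
    IsTestFunction Ω (smoothAbsRpow ε s ∘ u) := by
  obtain ⟨hsmooth, hcs, hΩ, hne⟩ := hu
  have hsupp := Function.support_comp_subset (smoothAbsRpow_zero_right (ε := ε) (s := s)) u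
  obtain ⟨x, hx⟩ := Function.ne_iff.1 hne
  refine ⟨(contDiff_smoothAbsRpow hε).comp hsmooth, hcs.mono hsupp,
    (closure_mono hsupp).trans hΩ, ?_⟩
  exact Function.ne_iff.2 ⟨x, (smoothAbsRpow_pos hs hx).ne'⟩

end TestFunction

section Eigenvalue

variable {n : ℕ} {Ω : Set (EuclideanSpace ℝ (Fin n))} {u : EuclideanSpace ℝ (Fin n) → ℝ}
  {p q ε : ℝ}

lemma lambdaOneP_eq_sInf_image (Ω : Set (EuclideanSpace ℝ (Fin n))) (p : ℝ) :
    lambdaOneP Ω p =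
      sInf (rayleighQuotient (volume.restrict Ω) p '' {u | IsTestFunction Ω u}) := by
  refine congrArg sInf (Set.ext fun R => ⟨?_, ?_⟩)
  · rintro ⟨u, h₁, h₂, h₃, h₄, rfl⟩
    exact ⟨u, ⟨h₁, h₂, h₃, h₄⟩, rfl⟩
  · rintro ⟨u, ⟨h₁, h₂, h₃, h₄⟩, rfl⟩
    exact ⟨u, h₁, h₂, h₃, h₄, rfl⟩

lemma lambdaOneP_nonneg : 0 ≤ lambdaOneP Ω p := by
  rw [lambdaOneP_eq_sInf_image]
  exact Real.sInf_nonneg (by rintro _ ⟨v, -, rfl⟩; exact rayleighQuotient_nonneg)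

lemma lambdaOneP_le (hu : IsTestFunction Ω u) :
    lambdaOneP Ω p ≤ rayleighQuotient (volume.restrict Ω) p u := by
  rw [lambdaOneP_eq_sInf_image]
  exact csInf_le ⟨0, by rintro _ ⟨v, -, rfl⟩; exact rayleighQuotient_nonneg⟩ ⟨u, hu, rfl⟩

lemma lambdaOneP_eq_zero (h : ∀ u, ¬IsTestFunction Ω u) : lambdaOneP Ω p = 0 := by
  have hempty : {u | IsTestFunction Ω u} = ∅ := Set.eq_empty_iff_forall_notMem.2 h
  rw [lambdaOneP_eq_sInf_image, hempty, Set.image_empty, Real.sInf_empty]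

lemma lambdaOneP_le_of_smoothAbsRpow_comp (hu : IsTestFunction Ω u) (hε : ε ≠ 0) (hq : 0 < q)
    (hqp : q < p) :
    lambdaOneP Ω q ≤ (p / q) ^ q * ((∫ x in tsupport u, smoothAbs ε (u x) ^ p) ^ (1 - q / p) *
        (∫ x in tsupport u, ‖gradient u x‖ ^ p) ^ (q / p)) /
      ∫ x in tsupport u, |smoothAbsRpow ε (p / q) (u x)| ^ q := by
  have hv := hu.smoothAbsRpow_comp hε (div_pos (hq.trans hqp) hq)
  have hvK : tsupport (smoothAbsRpow ε (p / q) ∘ u) ⊆ tsupport u :=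
    closure_mono (Function.support_comp_subset smoothAbsRpow_zero_right u)
  calc lambdaOneP Ω q ≤ rayleighQuotient (volume.restrict Ω) q (smoothAbsRpow ε (p / q) ∘ u) :=
        lambdaOneP_le hv
    _ = rayleighQuotient (volume.restrict (tsupport u)) q (smoothAbsRpow ε (p / q) ∘ u) := by
        rw [rayleighQuotient_restrict hv.tsupport_subset hq.ne',
          rayleighQuotient_restrict hvK hq.ne']
    _ ≤ _ := div_le_div_of_nonneg_right
        (setIntegral_norm_gradient_smoothAbsRpow_comp_le hu.hasCompactSupport
          (hu.contDiff.of_le (by simp)) hε hq hqp)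
        (integral_nonneg fun _ => by positivity)

theorem lambdaOneP_le_rpow_rayleighQuotient (hu : IsTestFunction Ω u) (hq : 0 < q)
    (hqp : q < p) :
    lambdaOneP Ω q ≤ (p / q) ^ q * rayleighQuotient (volume.restrict Ω) p u ^ (q / p) := by
  have hp : 0 < p := hq.trans hqp
  have hs : 0 < p / q := div_pos hp hq
  -- On the compact set `K` the integrals below are continuous in `ε`, including at `ε = 0`.
  set K := tsupport u
  have hpair : Continuous fun z : ℝ × EuclideanSpace ℝ (Fin n) => (z.1, u z.2) :=
    continuous_fst.prodMk (hu.contDiff.continuous.comp continuous_snd)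
  set A := fun ε => ∫ x in K, smoothAbs ε (u x) ^ p
  set B := fun ε => ∫ x in K, |smoothAbsRpow ε (p / q) (u x)| ^ q
  set G := ∫ x in K, ‖gradient u x‖ ^ p
  set I := ∫ x in K, |u x| ^ p
  have hA : Continuous A := continuous_parametric_integral_of_continuous
    ((continuous_smoothAbs.comp hpair).rpow_const fun _ => Or.inr hp.le) hu.hasCompactSupport
  have hB : Continuous B := continuous_parametric_integral_of_continuous
    (((continuous_smoothAbsRpow hs.le).comp hpair).abs.rpow_const fun _ => Or.inr hq.le)
    hu.hasCompactSupport
  have hA0 : A 0 = I := by simp [A, I]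
  have hB0 : B 0 = I := setIntegral_congr_fun measurableSet_closure fun x _ => by
    rw [smoothAbsRpow_zero_left hs.ne', abs_of_nonneg (by positivity), ← rpow_mul (abs_nonneg _),
      div_mul_cancel₀ p hq.ne']
  have hI : 0 < I :=
    setIntegral_tsupport_abs_rpow_pos hu.contDiff.continuous hu.hasCompactSupport hu.ne_zero hp
  have hlim : ContinuousAt (fun ε => (p / q) ^ q * (A ε ^ (1 - q / p) * G ^ (q / p)) / B ε) 0 :=
    (((hA.continuousAt.rpow_const (Or.inl (hA0 ▸ hI.ne'))).mul continuousAt_const).const_mul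
      _).div hB.continuousAt (hB0 ▸ hI.ne')
  calc lambdaOneP Ω q ≤ (p / q) ^ q * (A 0 ^ (1 - q / p) * G ^ (q / p)) / B 0 :=
        ge_of_tendsto (hlim.tendsto.mono_left nhdsWithin_le_nhds)
          (eventually_nhdsWithin_of_forall (s := {0}ᶜ) fun ε hε =>
            lambdaOneP_le_of_smoothAbsRpow_comp hu hε hq hqp)
    _ = (p / q) ^ q * rayleighQuotient (volume.restrict K) p u ^ (q / p) := by
        rw [hA0, hB0, mul_div_assoc,
          rpow_one_sub_mul_rpow_div_self hI (integral_nonneg fun _ => by positivity)]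
        rfl
    _ = (p / q) ^ q * rayleighQuotient (volume.restrict Ω) p u ^ (q / p) := by
        rw [rayleighQuotient_restrict hu.tsupport_subset hp.ne',
          rayleighQuotient_restrict subset_rfl hp.ne']

end Eigenvalue

theorem lambdaOneP_monotone_general {n : ℕ}
    (Ω : Set (EuclideanSpace ℝ (Fin n)))
    (p q : ℝ) (hq : 1 < q) (hpq : q < p) :
    q * lambdaOneP Ω q ^ (1 / q) ≤ p * lambdaOneP Ω p ^ (1 / p) := by
  have hq₀ : 0 < q := one_pos.trans hq
  have hp₀ : 0 < p := hq₀.trans hpq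
  by_cases h : ∃ u, IsTestFunction Ω u
  · obtain ⟨u, hu⟩ := h
    rw [lambdaOneP_eq_sInf_image Ω p]
    refine le_mul_sInf_rpow hp₀ (mul_nonneg hq₀.le (rpow_nonneg lambdaOneP_nonneg _))
      ⟨_, u, hu, rfl⟩ (by rintro _ ⟨v, -, rfl⟩; exact rayleighQuotient_nonneg) ?_
    rintro _ ⟨v, hv, rfl⟩
    exact mul_rpow_one_div_le_of_le lambdaOneP_nonneg rayleighQuotient_nonneg hp₀ hq₀
      (lambdaOneP_le_rpow_rayleighQuotient hv hq₀ hpq)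
  · rw [lambdaOneP_eq_zero (not_exists.1 h), lambdaOneP_eq_zero (not_exists.1 h),
      zero_rpow (by positivity), zero_rpow (by positivity), mul_zero, mul_zero]

/-- Extension of the Cheeger inequality: `p ↦ p (λ_{1,p}(Ω))^{1/p}` is increasing. -/
theorem lambdaOneP_monotone {n : ℕ}
    (Ω : Set (EuclideanSpace ℝ (Fin n))) (hne : Ω.Nonempty) (hΩ : IsOpen Ω)
    (hbd : Bornology.IsBounded Ω)
    (p q : ℝ) (hq : 1 < q) (hpq : q < p) :
    q * lambdaOneP Ω q ^ (1 / q) ≤ p * lambdaOneP Ω p ^ (1 / p) :=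
  lambdaOneP_monotone_general Ω p q hq hpq
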